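/- arXiv:2504.13433 — 2 statements merged into one kernel-verified Lean document; each statement's English description precedes it below -/
import Mathlib

section
/- For every n ≥ 1, B_{n+1} = G(B_n, 1), i.e., applying the generation operator with starting symbol 1 to the block B_n interpreted as a run-length vector yields exactly the next block B_{n+1} = B_n ++ P_n ++ B_n. -/
/-!
Reading `B n ++ P n ++ B n` as a run-length vector, `G` splits along the two seams; since
`B n` and `P n` have odd length, the starting symbol flips at each seam, so
`G (B (n+1)) 1 = G (B n) 1 ++ G (P n) 3 ++ G (B n) 1`, which is `B (n+2)` by induction.
The odd lengths propagate because every entry of a pillar is `1` or `3`, so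
`|P (n+1)| = ∑ P n ≡ |P n| (mod 2)`.
-/

/-- Generation operator: expand a run-length vector `R` starting with symbol `s`,
alternating between `s` and `4 - s` from run to run. -/
def G : List ℕ → ℕ → List ℕ
  | [], _ => []
  | r :: rs, s => List.replicate r s ++ G rs (4 - s)

/-- Pillar sequences: `P 1 = [3]`, `P (n+1) = G (P n) 3` for `n ≥ 1`. -/
def P : ℕ → List ℕ
  | 0 => []
  | 1 => [3]
  | n + 2 => G (P (n + 1)) 3

/-- Block sequences: `B 1 = G [1,3,3,3,1] 1`, `B (n+1) = B n ++ P n ++ B n` for `n ≥ 1`. -/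
def B : ℕ → List ℕ
  | 0 => []
  | 1 => G [1, 3, 3, 3, 1] 1
  | n + 2 => B (n + 1) ++ P (n + 1) ++ B (n + 1)

lemma length_G (rs : List ℕ) (s : ℕ) : (G rs s).length = rs.sum := by
  induction rs generalizing s with
  | nil => rfl
  | cons r rs ih => simp [G, ih]

lemma mem_G {rs : List ℕ} {s x : ℕ} (hx : x ∈ G rs s) (hs : s ≤ 4) : x = s ∨ x = 4 - s := by
  induction rs generalizing s with
  | nil => simp [G] at hx
  | cons r rs ih =>
    simp only [G, List.mem_append] at hx
    rcases hx with hx | hx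
    · exact .inl (List.eq_of_mem_replicate hx)
    · have := ih hx (by omega)
      omega

lemma G_append {s : ℕ} (hs : s ≤ 4) (a b : List ℕ) :
    G (a ++ b) s = G a s ++ G b (if Even a.length then s else 4 - s) := by
  induction a generalizing s with
  | nil => simp [G]
  | cons r rs ih =>
    rw [List.cons_append, G, G, ih (by omega), List.append_assoc, List.length_cons]
    congr 3
    simp only [Nat.even_add_one]
    split_ifs <;> omega

lemma G_append_of_odd {s : ℕ} (hs : s ≤ 4) {a : List ℕ} (ha : Odd a.length) (b : List ℕ) :
    G (a ++ b) s = G a s ++ G b (4 - s) := by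
  simp [G_append hs, Nat.not_even_iff_odd.2 ha]

lemma List.odd_sum_iff_odd_length {l : List ℕ} (h : ∀ x ∈ l, Odd x) :
    Odd l.sum ↔ Odd l.length := by
  induction l with
  | nil => simp
  | cons a l ih =>
    simp only [List.forall_mem_cons] at h
    rw [List.sum_cons, List.length_cons, Nat.odd_add, Nat.odd_add_one, ← Nat.not_odd_iff_even,
      ih h.2]
    simp [h.1]

lemma P_succ {n : ℕ} (hn : 1 ≤ n) : P (n + 1) = G (P n) 3 := by
  obtain ⟨m, rfl⟩ := Nat.exists_eq_add_of_le' hn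
  rfl

lemma B_succ {n : ℕ} (hn : 1 ≤ n) : B (n + 1) = B n ++ P n ++ B n := by
  obtain ⟨m, rfl⟩ := Nat.exists_eq_add_of_le' hn
  rfl

lemma odd_of_mem_P {n x : ℕ} (hx : x ∈ P n) : Odd x := by
  match n, hx with
  | 1, hx =>
    obtain rfl : x = 3 := List.mem_singleton.1 hx
    decide
  | m + 2, hx =>
    rcases mem_G hx (by norm_num) with rfl | rfl <;> decide

lemma odd_length_P {n : ℕ} (hn : 1 ≤ n) : Odd (P n).length := by
  induction n, hn using Nat.le_induction with
  | base => decide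
  | succ n hn ih =>
    rw [P_succ hn, length_G, List.odd_sum_iff_odd_length fun _ => odd_of_mem_P]
    exact ih

lemma odd_length_B {n : ℕ} (hn : 1 ≤ n) : Odd (B n).length := by
  match n with
  | 1 => decide
  | m + 2 =>
    have hP := odd_length_P (n := m + 1) (by omega)
    rw [B_succ (by omega), List.length_append, List.length_append]
    grind

lemma G_B {n : ℕ} (hn : 1 ≤ n) : G (B n) 1 = B (n + 1) := by
  induction n, hn using Nat.le_induction with
  | base => decide
  | succ n hn ih =>
    rw [B_succ hn, List.append_assoc, G_append_of_odd (by norm_num) (odd_length_B hn),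
      G_append_of_odd (by norm_num) (odd_length_P hn), ih, ← P_succ hn, ← List.append_assoc,
      ← B_succ (by omega)]

/-- For every `n ≥ 1`, applying the generation operator with starting symbol `1`
to `B n` (interpreted as a run-length vector) yields exactly
`B (n+1) = B n ++ P n ++ B n`. -/
theorem block_kolakoski_step :
    ∀ n : ℕ, 1 ≤ n → G (B n) 1 = B (n + 1) ∧ B (n + 1) = B n ++ P n ++ B n :=
  fun _ hn => ⟨G_B hn, B_succ hn⟩
end

section
/- Suppose the pillar densities δ_n = o_n/m_n converge to a limit d with d < 1/2. Then the pillar lengths m_n grow exponentially: there exist a real constant γ > 2 and an index N such that for all n ≥ N, m_{n+1} > γ·m_n. -/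
lemma G_length (R : List ℕ) (s : ℕ) : (G R s).length = R.sum := by
  induction R generalizing s with
  | nil => simp [G]
  | cons a l ih => simp [G, ih]

lemma G_mem (R : List ℕ) (s : ℕ) (hs : s = 1 ∨ s = 3) :
    ∀ x ∈ G R s, x = 1 ∨ x = 3 := by
  induction R generalizing s with
  | nil => simp [G]
  | cons a l ih =>
    intro x hx
    simp only [G, List.mem_append, List.mem_replicate] at hx
    rcases hx with ⟨_, rfl⟩ | hx
    · exact hs
    · exact ih (4 - s) (by rcases hs with rfl | rfl <;> simp) x hx

lemma P_mem : ∀ n, ∀ x ∈ P n, x = 1 ∨ x = 3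
  | 0 => by simp [P]
  | 1 => by simp [P]
  | n + 2 => G_mem (P (n + 1)) 3 (Or.inr rfl)

lemma length_le_sum (L : List ℕ) (h : ∀ x ∈ L, 1 ≤ x) : L.length ≤ L.sum := by
  induction L with
  | nil => simp
  | cons a l ih =>
    simp only [List.length_cons, List.sum_cons]
    have := h a (by simp)
    have := ih (fun x hx => h x (by simp [hx]))
    omega

lemma P_len_pos : ∀ n, 1 ≤ n → 1 ≤ (P n).length
  | 0, h => by omega
  | 1, _ => by simp [P]
  | n + 2, _ => by
    have h1 : 1 ≤ (P (n + 1)).length := P_len_pos (n + 1) (by omega)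
    have h2 : (P (n + 1)).length ≤ (P (n + 1)).sum :=
      length_le_sum _ (fun x hx => by rcases P_mem (n + 1) x hx with rfl | rfl <;> omega)
    simpa [P, G_length] using h1.trans h2

lemma sum_count (L : List ℕ) (h : ∀ x ∈ L, x = 1 ∨ x = 3) :
    L.sum + 2 * L.count 1 = 3 * L.length := by
  induction L with
  | nil => simp
  | cons a l ih =>
    have ha := h a (by simp)
    have ihl := ih (fun x hx => h x (by simp [hx]))
    rcases ha with rfl | rfl <;> simp [List.count_cons] <;> omega

lemma P_succ_len (n : ℕ) (hn : 1 ≤ n) :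
    (P (n + 1)).length + 2 * (P n).count 1 = 3 * (P n).length := by
  obtain ⟨k, rfl⟩ := Nat.exists_eq_add_of_le hn
  show (P (1 + k + 1)).length + _ = _
  have h1 : 1 + k + 1 = k + 2 := by omega
  have h2 : 1 + k = k + 1 := by omega
  rw [h1, h2]
  rw [show P (k + 2) = G (P (k + 1)) 3 from rfl, G_length]
  exact sum_count _ (P_mem (k + 1))

/-- If the pillar densities `δ n = o n / m n` converge to a limit `d < 1/2`, then the
pillar lengths grow exponentially: there are `γ > 2` and `N` with
`m (n+1) > γ · m n` for all `n ≥ N`. -/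
theorem pillar_exponential_growth (d : ℝ)
    (hlim : Filter.Tendsto
      (fun n => ((P n).count 1 : ℝ) / ((P n).length : ℝ)) Filter.atTop (nhds d))
    (hd : d < 1 / 2) :
    ∃ γ : ℝ, 2 < γ ∧ ∃ N : ℕ, ∀ n : ℕ, N ≤ n →
      γ * ((P n).length : ℝ) < ((P (n + 1)).length : ℝ) := by
  set d' : ℝ := (d + 1 / 2) / 2 with hd'def
  have hdd' : d < d' := by simp only [hd'def]; linarith
  have hd'half : d' < 1 / 2 := by simp only [hd'def]; linarith
  refine ⟨3 - 2 * d', by linarith, ?_⟩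
  have hev : ∀ᶠ n in Filter.atTop,
      ((P n).count 1 : ℝ) / ((P n).length : ℝ) < d' :=
    hlim.eventually (gt_mem_nhds hdd')
  obtain ⟨N0, hN0⟩ := Filter.eventually_atTop.mp hev
  refine ⟨max N0 1, fun n hn => ?_⟩
  have hn1 : 1 ≤ n := le_trans (le_max_right _ _) hn
  have hmpos : (0 : ℝ) < ((P n).length : ℝ) := by
    exact_mod_cast P_len_pos n hn1
  have hq := hN0 n (le_trans (le_max_left _ _) hn)
  have hcnt : ((P n).count 1 : ℝ) < d' * ((P n).length : ℝ) :=
    (div_lt_iff₀ hmpos).mp hq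
  have hrel : ((P (n + 1)).length : ℝ) + 2 * ((P n).count 1 : ℝ)
      = 3 * ((P n).length : ℝ) := by
    exact_mod_cast congrArg (Nat.cast : ℕ → ℝ) (P_succ_len n hn1)
  nlinarith
end
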